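/- For f : ℝⁿ → ℝ (n > 1), f(x) = |x_n - ‖pr(x)‖| + x_n/2 with pr(x) = (x_1,…,x_{n-1}), the point x = 0 is Clarke critical: 0 ∈ ∂f(0). -/

import Mathlib

/-!
`f` is nonnegative (for `x_n < 0` already `|x_n - ‖pr x‖| ≥ -x_n`) and vanishes at the origin,
so `0` is a global minimizer. For a Lipschitz function, a local minimizer `x` is Clarke critical:
the difference quotients `(f (x + t • v) - f x) / t` taken at `x` itself are nonnegative for small
`t > 0`, so their limsup, which the Lipschitz bound keeps finite, is nonnegative in every direction.
-/

open Filter Set Topology RealInnerProductSpace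

noncomputable def clarkeDir {E : Type*} [NormedAddCommGroup E] [InnerProductSpace ℝ E]
    (f : E → ℝ) (x v : E) : ℝ :=
  Filter.limsup (fun p : E × ℝ => (f (p.1 + p.2 • v) - f p.1) / p.2)
    ((nhds x) ×ˢ (nhdsWithin 0 (Set.Ioi 0)))

noncomputable def clarkeSubdiff {E : Type*} [NormedAddCommGroup E] [InnerProductSpace ℝ E]
    (f : E → ℝ) (x : E) : Set E :=
  {ξ | ∀ v, ⟪ξ, v⟫ ≤ clarkeDir f x v}

noncomputable def goldsteinSubdiff {E : Type*} [NormedAddCommGroup E] [InnerProductSpace ℝ E]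
    (f : E → ℝ) (ε : ℝ) (x : E) : Set E :=
  convexHull ℝ (⋃ y ∈ Metric.closedBall x ε, clarkeSubdiff f y)


noncomputable def prE {n : ℕ} (x : EuclideanSpace ℝ (Fin (n + 1))) :
    EuclideanSpace ℝ (Fin n) :=
  WithLp.toLp 2 (fun i => x i.castSucc)

noncomputable def snocE {n : ℕ} (u : EuclideanSpace ℝ (Fin n)) (r : ℝ) :
    EuclideanSpace ℝ (Fin (n + 1)) :=
  WithLp.toLp 2 (fun i => (Fin.snoc (fun j : Fin n => u j) r : Fin (n + 1) → ℝ) i)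

noncomputable def fEx (n : ℕ) (x : EuclideanSpace ℝ (Fin (n + 1))) : ℝ :=
  |x (Fin.last n) - ‖prE x‖| + x (Fin.last n) / 2

section Clarke

variable {E : Type*} [NormedAddCommGroup E] [InnerProductSpace ℝ E] {f : E → ℝ} {K : NNReal}

lemma isBoundedUnder_le_clarkeQuotient (hf : LipschitzWith K f) (x v : E) :
    IsBoundedUnder (· ≤ ·) ((𝓝 x) ×ˢ (𝓝[>] (0 : ℝ)))
      (fun p : E × ℝ => (f (p.1 + p.2 • v) - f p.1) / p.2) := by
  refine ⟨K * ‖v‖, eventually_map.2 ?_⟩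
  filter_upwards [Eventually.prod_inr self_mem_nhdsWithin (𝓝 x)] with p (hp : 0 < p.2)
  rw [div_le_iff₀ hp]
  calc f (p.1 + p.2 • v) - f p.1 ≤ ‖f (p.1 + p.2 • v) - f p.1‖ := Real.le_norm_self _
    _ ≤ K * ‖p.1 + p.2 • v - p.1‖ := hf.norm_sub_le _ _
    _ = K * ‖v‖ * p.2 := by
      rw [add_sub_cancel_left, norm_smul, Real.norm_of_nonneg hp.le]; ring

lemma clarkeDir_nonneg_of_isLocalMin (hf : LipschitzWith K f) {x : E} (hx : IsLocalMin f x)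
    (v : E) : 0 ≤ clarkeDir f x v := by
  have hmin : ∀ᶠ t in 𝓝[>] (0 : ℝ), 0 < t ∧ f x ≤ f (x + t • v) := by
    have hpath : Tendsto (fun t : ℝ => x + t • v) (𝓝[>] 0) (𝓝 x) := by
      have : Continuous fun t : ℝ => x + t • v := by fun_prop
      simpa using this.continuousWithinAt.tendsto (s := Ioi 0) (x := 0)
    exact eventually_mem_nhdsWithin.and (hpath.eventually hx)
  have hbase : Tendsto (fun t : ℝ => (x, t)) (𝓝[>] 0) ((𝓝 x) ×ˢ (𝓝[>] 0)) :=
    tendsto_const_nhds.prodMk tendsto_id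
  refine le_limsup_of_frequently_le (hbase.frequently (hmin.mono ?_).frequently)
    (isBoundedUnder_le_clarkeQuotient hf x v)
  rintro t ⟨ht, hle⟩
  exact div_nonneg (sub_nonneg.2 hle) ht.le

lemma zero_mem_clarkeSubdiff_of_isLocalMin (hf : LipschitzWith K f) {x : E}
    (hx : IsLocalMin f x) : (0 : E) ∈ clarkeSubdiff f x := fun v => by
  simpa only [inner_zero_left] using clarkeDir_nonneg_of_isLocalMin hf hx v

end Clarke

section FEx

variable {n : ℕ}

lemma prE_sub (x y : EuclideanSpace ℝ (Fin (n + 1))) : prE (x - y) = prE x - prE y := by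
  ext i; simp [prE]

lemma norm_prE_le (x : EuclideanSpace ℝ (Fin (n + 1))) : ‖prE x‖ ≤ ‖x‖ := by
  rw [EuclideanSpace.norm_eq, EuclideanSpace.norm_eq, Fin.sum_univ_castSucc]
  exact Real.sqrt_le_sqrt (le_add_of_le_of_nonneg (by simp [prE]) (sq_nonneg _))

lemma prE_zero : prE (0 : EuclideanSpace ℝ (Fin (n + 1))) = 0 := by
  ext i; simp [prE]

lemma lipschitzWith_prE : LipschitzWith 1 (prE (n := n)) :=
  LipschitzWith.of_dist_le_mul fun x y => by
    simpa [dist_eq_norm, ← prE_sub] using norm_prE_le (x - y)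

lemma lipschitzWith_fEx : LipschitzWith 3 (fEx n) := by
  have hlast : LipschitzWith 1 fun x : EuclideanSpace ℝ (Fin (n + 1)) => x (Fin.last n) :=
    LipschitzWith.of_dist_le_mul fun x y => by simpa using PiLp.dist_apply_le x y (Fin.last n)
  have hhalf : LipschitzWith 1 fun x : EuclideanSpace ℝ (Fin (n + 1)) => x (Fin.last n) / 2 :=
    LipschitzWith.of_dist_le_mul fun x y => by
      have := hlast.dist_le_mul x y
      rw [Real.dist_eq] at this ⊢
      rw [← sub_div, abs_div, abs_two]
      linarith [abs_nonneg (x (Fin.last n) - y (Fin.last n))]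
  have h := (lipschitzWith_one_norm.comp
    (hlast.sub (lipschitzWith_one_norm.comp lipschitzWith_prE))).add hhalf
  rwa [show (1 * (1 + 1 * 1) + 1 : NNReal) = 3 by norm_num] at h

lemma fEx_nonneg (x : EuclideanSpace ℝ (Fin (n + 1))) : 0 ≤ fEx n x := by
  unfold fEx
  rcases le_total 0 (x (Fin.last n)) with h | h
  · exact add_nonneg (abs_nonneg _) (by linarith)
  · linarith [neg_abs_le (x (Fin.last n) - ‖prE x‖), norm_nonneg (prE x)]

lemma fEx_zero : fEx n 0 = 0 := by simp [fEx, prE_zero]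

lemma isLocalMin_fEx_zero : IsLocalMin (fEx n) 0 :=
  Eventually.of_forall fun x => fEx_zero.trans_le (fEx_nonneg x)

end FEx

theorem stmt18_general {n : ℕ} :
    (0 : EuclideanSpace ℝ (Fin (n + 1))) ∈ clarkeSubdiff (fEx n) 0 :=
  zero_mem_clarkeSubdiff_of_isLocalMin lipschitzWith_fEx isLocalMin_fEx_zero

theorem stmt18 {n : ℕ} (hn : 1 ≤ n) :
    (0 : EuclideanSpace ℝ (Fin (n + 1))) ∈ clarkeSubdiff (fEx n) 0 :=
  stmt18_general
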